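/- arXiv:2407.00479 — 2 statements merged into one kernel-verified Lean document; each statement's English description precedes it below -/
import Mathlib

section
/- Let M be a maximally monotone subset of B. Then M = L⁻¹(M^♯); in particular, L(M) ⊆ M^♯. -/
open NormedSpace

noncomputable section

variable (E : Type*) [NormedAddCommGroup E] [NormedSpace ℝ E]

/-- `B = E × E*`. -/
abbrev BSp := E × StrongDual ℝ E

/-- `B* = E* × E**`. -/
abbrev BStar := StrongDual ℝ E × StrongDual ℝ (StrongDual ℝ E)

/-- `q(x, x*) = ⟨x, x*⟩`. -/
def qB (b : BSp E) : ℝ := b.2 b.1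

/-- `r(b) = ½‖b‖² + q(b)`, where `‖(x,x*)‖² = ‖x‖² + ‖x*‖²`. -/
def rB (b : BSp E) : ℝ := (‖b.1‖ ^ 2 + ‖b.2‖ ^ 2) / 2 + qB E b

/-- `q̃(y*, y**) = ⟨y*, y**⟩`. -/
def qS (p : BStar E) : ℝ := p.2 p.1

/-- `r̃(b*) = ½‖b*‖² + q̃(b*)`. -/
def rS (p : BStar E) : ℝ := (‖p.1‖ ^ 2 + ‖p.2‖ ^ 2) / 2 + qS E p

/-- The isometry `L(y, y*) = (y*, ŷ)`. -/
def LMap (b : BSp E) : BStar E := (b.2, inclusionInDoubleDual ℝ E b.1)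

/-- A subset of `B` is monotone. -/
def IsMonot (A : Set (BSp E)) : Prop := ∀ d ∈ A, ∀ e ∈ A, 0 ≤ qB E (d - e)

/-- A subset of `B` is maximally monotone. -/
def IsMaxMonot (A : Set (BSp E)) : Prop :=
  IsMonot E A ∧ ∀ A' : Set (BSp E), IsMonot E A' → A ⊆ A' → A' = A

/-- A subset of `B*` is monotone. -/
def IsMonotStar (N : Set (BStar E)) : Prop := ∀ d ∈ N, ∀ e ∈ N, 0 ≤ qS E (d - e)

/-- A subset of `B*` is maximally monotone. -/
def IsMaxMonotStar (N : Set (BStar E)) : Prop :=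
  IsMonotStar E N ∧ ∀ N' : Set (BStar E), IsMonotStar E N' → N ⊆ N' → N' = N

/-- `A` is quasidense: `inf_{a ∈ A} r(a - b) = 0` for every `b ∈ B`. -/
def Quasidense (A : Set (BSp E)) : Prop :=
  ∀ b : BSp E, (⨅ a ∈ A, (rB E (a - b) : EReal)) = 0

/-- `P_M(b) = −inf_{m ∈ M} q(m − b)`, an extended real. -/
def PFn (M : Set (BSp E)) (b : BSp E) : EReal := -(⨅ m ∈ M, (qB E (m - b) : EReal))

/-- `F_M(b*) = −inf_{b ∈ B} [P_M(b) + q̃(b* − Lb)]`. -/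
def FFn (M : Set (BSp E)) (p : BStar E) : EReal :=
  -(⨅ b : BSp E, (PFn E M b + (qS E (p - LMap E b) : EReal)))

/-- `G_M(b*) = −inf_{m ∈ M} q̃(Lm − b*)`. -/
def GFn (M : Set (BSp E)) (p : BStar E) : EReal :=
  -(⨅ m ∈ M, (qS E (LMap E m - p) : EReal))

/-- The Gossez extension `M^♯ = {b* : G_M(b*) ≤ 0}`. -/
def Sharp (M : Set (BSp E)) : Set (BStar E) := {p | GFn E M p ≤ 0}

/-- `M` is of type (NI): `G_M ≥ 0` on `B*`. -/
def TypeNI (M : Set (BSp E)) : Prop := ∀ p : BStar E, 0 ≤ GFn E M p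

section

variable {E}

lemma qB_neg (b : BSp E) : qB E (-b) = qB E b := by
  simp [qB]

lemma qB_sub_comm (b c : BSp E) : qB E (b - c) = qB E (c - b) := by
  rw [← neg_sub, qB_neg]

lemma LMap_sub (b c : BSp E) : LMap E (b - c) = LMap E b - LMap E c := by
  simp [LMap]

lemma qS_LMap (b : BSp E) : qS E (LMap E b) = qB E b := rfl

lemma LMap_mem_sharp_iff {M : Set (BSp E)} {b : BSp E} :
    LMap E b ∈ Sharp E M ↔ ∀ m ∈ M, 0 ≤ qB E (m - b) := by
  simp only [Sharp, GFn, Set.mem_ofPred_eq, EReal.neg_le, neg_zero, le_iInf₂_iff,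
    ← LMap_sub, qS_LMap, EReal.coe_nonneg]

lemma IsMonot.insert {A : Set (BSp E)} (hA : IsMonot E A) {b : BSp E}
    (hb : ∀ a ∈ A, 0 ≤ qB E (a - b)) : IsMonot E (insert b A) := by
  rintro d (rfl | hd) e (rfl | he)
  · simp [qB]
  · rw [qB_sub_comm]
    exact hb e he
  · exact hb d hd
  · exact hA d hd e he

lemma IsMaxMonot.mem_of_forall_qB_nonneg {M : Set (BSp E)} (hM : IsMaxMonot E M) {b : BSp E}
    (hb : ∀ m ∈ M, 0 ≤ qB E (m - b)) : b ∈ M := by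
  rw [← hM.2 _ (hM.1.insert hb) (Set.subset_insert b M)]
  exact Set.mem_insert b M

end

variable [CompleteSpace E] [Nontrivial E]

/-- `M = L⁻¹(M^♯)`; in particular `L(M) ⊆ M^♯`. -/
theorem eq_preimage_sharp (M : Set (BSp E)) (hM : IsMaxMonot E M) :
    M = LMap E ⁻¹' Sharp E M ∧ LMap E '' M ⊆ Sharp E M := by
  have hpre : M = LMap E ⁻¹' Sharp E M := Set.ext fun b =>
    ⟨fun hb => LMap_mem_sharp_iff.2 fun m hm => hM.1 m hm b hb,
      fun hb => hM.mem_of_forall_qB_nonneg (LMap_mem_sharp_iff.1 hb)⟩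
  exact ⟨hpre, Set.image_subset_iff.2 hpre.subset⟩
end
end

section
/- Let M be a maximally monotone subset of B. Then F_M(Lb) = −(P_M □ q)(b) for every b ∈ B, and F_M(Lm) = 0 for every m ∈ M. -/
/-!
Since `q̃(Lb − Ly) = q(b − y)`, the first identity is a rewriting of the definition of `F_M`.
For `m ∈ M`, monotonicity gives `P_M(m) = 0` and `P_M(y) ≥ −q(m − y)` for all `y`, so the
infimum defining `(P_M □ q)(m)` is `0`, attained at `y = m`.
-/

open NormedSpace

noncomputable section

variable (E : Type*) [NormedAddCommGroup E] [NormedSpace ℝ E]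

theorem qS_LMap_sub_LMap (b y : BSp E) : qS E (LMap E b - LMap E y) = qB E (b - y) := by
  simp only [qS, qB, LMap, Prod.fst_sub, Prod.snd_sub, map_sub, sub_apply, dual_def]
  ring

theorem FFn_LMap (M : Set (BSp E)) (b : BSp E) :
    FFn E M (LMap E b) = -(⨅ y : BSp E, (PFn E M y + (qB E (b - y) : EReal))) := by
  simp only [FFn, qS_LMap_sub_LMap]

theorem neg_qB_sub_le_PFn {M : Set (BSp E)} {m : BSp E} (hm : m ∈ M) (y : BSp E) :
    -(qB E (m - y) : EReal) ≤ PFn E M y :=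
  EReal.neg_le_neg_iff.mpr (iInf₂_le m hm)

theorem PFn_eq_zero_of_mem {M : Set (BSp E)} (hM : IsMonot E M) {m : BSp E} (hm : m ∈ M) :
    PFn E M m = 0 := by
  refine le_antisymm ?_ ?_
  · exact EReal.neg_le_zero.mpr (le_iInf₂ fun m' hm' => EReal.coe_nonneg.mpr (hM m' hm' m hm))
  · simpa [qB] using neg_qB_sub_le_PFn E hm m

theorem FFn_LMap_eq_zero_of_mem {M : Set (BSp E)} (hM : IsMonot E M) {m : BSp E} (hm : m ∈ M) :
    FFn E M (LMap E m) = 0 := by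
  rw [FFn_LMap, EReal.neg_eq_zero_iff]
  refine le_antisymm ?_ (le_iInf fun y => ?_)
  · calc (⨅ y : BSp E, (PFn E M y + (qB E (m - y) : EReal)))
        ≤ PFn E M m + (qB E (m - m) : EReal) := iInf_le _ m
      _ = 0 := by simp [PFn_eq_zero_of_mem E hM hm, qB]
  · calc (0 : EReal) = -(qB E (m - y) : EReal) + (qB E (m - y) : EReal) := by
          rw [← EReal.coe_neg, ← EReal.coe_add, neg_add_cancel, EReal.coe_zero]
      _ ≤ PFn E M y + (qB E (m - y) : EReal) := by gcongr; exact neg_qB_sub_le_PFn E hm y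

variable [CompleteSpace E] [Nontrivial E]

/-- `F_M ∘ L = −(P_M □ q)` on `B` and `F_M ∘ L = 0` on `M`. -/
theorem FFun_comp_LMap (M : Set (BSp E)) (hM : IsMaxMonot E M) :
    (∀ b : BSp E, FFn E M (LMap E b) =
        -(⨅ y : BSp E, (PFn E M y + (qB E (b - y) : EReal)))) ∧
      ∀ m ∈ M, FFn E M (LMap E m) = 0 :=
  ⟨FFn_LMap E M, fun _ hm => FFn_LMap_eq_zero_of_mem E hM.1 hm⟩
end
end
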